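/- arXiv:2006.02078 — 4 statements merged into one kernel-verified Lean document; each statement's English description precedes it below -/
import Mathlib

section
/- Every tree-structured constraint graph (with a partial integer labeling λ) that is embeddable into ℤ satisfies condition (★). -/
namespace ConstraintGraphs

/-- Nodes of the infinite `n`-ary tree: finite words over `{1,…,n}`. -/
abbrev Node (n : ℕ) := List (Fin n)

/-- Vertices: pairs of a tree node and a register. -/
abbrev Vtx (n : ℕ) (R : Type) := Node n × R

/-- `IsChild v u` : the word `v` is a child of the word `u`. -/
def IsChild {n : ℕ} (v u : Node n) : Prop := ∃ γ : Fin n, v = u ++ [γ]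

/-- A tree-structured constraint graph on the vertex set `[n]* × R`:
two edge relations (strict edges `lt` and equality edges `eqe`) such that
every edge joins vertices lying at the same node or at a parent/child pair. -/
structure CGraph (n : ℕ) (R : Type) where
  lt : Vtx n R → Vtx n R → Prop
  eqe : Vtx n R → Vtx n R → Prop
  local_edges : ∀ a b : Vtx n R, lt a b ∨ eqe a b →
    a.1 = b.1 ∨ IsChild b.1 a.1 ∨ IsChild a.1 b.1

variable {n : ℕ} {R : Type}

/-- `p 0, …, p k` is a (finite) path in `G`. -/
def CGraph.IsPathTo (G : CGraph n R) (p : ℕ → Vtx n R) (k : ℕ) : Prop :=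
  ∀ i < k, G.lt (p i) (p (i + 1)) ∨ G.eqe (p i) (p (i + 1))

/-- The strict length of the finite path `p 0, …, p k`:
the number of indices `i < k` where a strict edge is used. -/
noncomputable def CGraph.strictLen (G : CGraph n R) (p : ℕ → Vtx n R) (k : ℕ) : ℕ :=
  Set.ncard {i : ℕ | i < k ∧ G.lt (p i) (p (i + 1))}

/-- The word `w₁ ⋯ w_i` (the first `i` letters of the infinite word `w`). -/
def wpfx (w : ℕ → Fin n) (i : ℕ) : Node n := (List.range i).map w

/-- A violation of condition (★) for the pair of relations `slt` (strict edges)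
and `seq` (equality edges): a node `u`, registers `x, y`, an infinite word `w`,
an infinite forward path `f` from `(u,x)` along `w` and an infinite backward
path `b` from `(u,y)` along `w`, with a strict edge from `f i` to `b i` for every
`i`, such that `f` or `b` uses infinitely many strict edges. -/
def StarViol (slt seq : Vtx n R → Vtx n R → Prop) : Prop :=
  ∃ (u : Node n) (x y : R) (w : ℕ → Fin n) (f b : ℕ → Vtx n R),
    f 0 = (u, x) ∧ b 0 = (u, y) ∧
    (∀ i : ℕ, (f i).1 = u ++ wpfx w i) ∧
    (∀ i : ℕ, (b i).1 = u ++ wpfx w i) ∧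
    (∀ i : ℕ, slt (f i) (f (i + 1)) ∨ seq (f i) (f (i + 1))) ∧
    (∀ i : ℕ, slt (b (i + 1)) (b i) ∨ seq (b (i + 1)) (b i)) ∧
    (∀ i : ℕ, slt (f i) (b i)) ∧
    ((∀ N : ℕ, ∃ i, N ≤ i ∧ slt (f i) (f (i + 1))) ∨
      (∀ N : ℕ, ∃ i, N ≤ i ∧ slt (b (i + 1)) (b i)))

/-- Condition (★) for a tree-structured constraint graph. -/
def Star (G : CGraph n R) : Prop := ¬ StarViol G.lt G.eqe

/-- Embeddability into ℤ of a tree-structured constraint graph together with a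
partial integer labeling `lab`. -/
def EmbeddableWith (G : CGraph n R) (lab : Vtx n R → Option ℤ) : Prop :=
  ∃ κ : Vtx n R → ℤ,
    (∀ a b : Vtx n R, G.lt a b → κ a < κ b) ∧
    (∀ a b : Vtx n R, G.eqe a b → κ a = κ b) ∧
    (∀ (v : Vtx n R) (c : ℤ), lab v = some c → κ v = c)

lemma unbounded_of_steps (g : ℕ → ℤ)
    (hstep : ∀ i, g i ≤ g (i + 1))
    (hinf : ∀ N : ℕ, ∃ i, N ≤ i ∧ g i < g (i + 1)) :
    ∀ k : ℕ, ∃ i, g 0 + k ≤ g i := by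
  have hmono : Monotone g := monotone_nat_of_le_succ hstep
  intro k
  induction k with
  | zero => exact ⟨0, by simp⟩
  | succ k ih =>
    obtain ⟨i, hi⟩ := ih
    obtain ⟨j, hij, hj⟩ := hinf i
    refine ⟨j + 1, ?_⟩
    have : g i ≤ g j := hmono hij
    push_cast
    omega

/-- every tree-structured constraint graph (with a partial integer
labeling) that is embeddable into ℤ satisfies condition (★). -/
theorem embeddable_satisfies_star (n : ℕ) (hn : 1 ≤ n)
    (R : Type) [Fintype R] [Nonempty R]
    (G : CGraph n R) (lab : Vtx n R → Option ℤ)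
    (hemb : EmbeddableWith G lab) : Star G := by
  obtain ⟨κ, hlt, heq, -⟩ := hemb
  rintro ⟨u, x, y, w, f, b, hf0, hb0, hfn, hbn, hfe, hbe, hfb, hinf⟩
  -- κ ∘ f is nondecreasing, κ ∘ b is nonincreasing, κ (f i) < κ (b i)
  have hfstep : ∀ i, κ (f i) ≤ κ (f (i + 1)) := fun i => by
    rcases hfe i with h | h
    · exact (hlt _ _ h).le
    · exact (heq _ _ h).le
  have hbstep : ∀ i, κ (b (i + 1)) ≤ κ (b i) := fun i => by
    rcases hbe i with h | h
    · exact (hlt _ _ h).le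
    · exact (heq _ _ h).le
  have hfmono : Monotone (fun i => κ (f i)) := monotone_nat_of_le_succ hfstep
  have hbanti : Antitone (fun i => κ (b i)) := antitone_nat_of_succ_le hbstep
  have hbound : ∀ i, κ (f 0) ≤ κ (f i) ∧ κ (f i) < κ (b i) ∧ κ (b i) ≤ κ (b 0) :=
    fun i => ⟨hfmono (Nat.zero_le i), hlt _ _ (hfb i), hbanti (Nat.zero_le i)⟩
  rcases hinf with hF | hB
  · obtain ⟨i, hi⟩ := unbounded_of_steps (fun i => κ (f i)) hfstep
      (fun N => by obtain ⟨i, hNi, h⟩ := hF N; exact ⟨i, hNi, hlt _ _ h⟩)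
      (κ (b 0) - κ (f 0)).toNat
    have hi' : κ (f 0) + ((κ (b 0) - κ (f 0)).toNat : ℤ) ≤ κ (f i) := hi
    have h1 := (hbound i).2.1
    have h2 := (hbound i).2.2
    have h3 := (hbound 0).2.1
    omega
  · obtain ⟨i, hi⟩ := unbounded_of_steps (fun i => - κ (b i))
      (fun i => by simpa using neg_le_neg (hbstep i))
      (fun N => by obtain ⟨i, hNi, h⟩ := hB N
                   exact ⟨i, hNi, by simpa using neg_lt_neg (hlt _ _ h)⟩)
      (κ (b 0) - κ (f 0)).toNat
    have hi' : -κ (b 0) + ((κ (b 0) - κ (f 0)).toNat : ℤ) ≤ -κ (b i) := hi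
    have h1 := (hbound i).1
    have h2 := (hbound i).2.1
    have h3 := (hbound 0).2.1
    omega

end ConstraintGraphs
end

section
/- A framified constraint graph contains no strict cycle. -/
namespace ConstraintGraphs

variable {n : ℕ} {R : Type}

/-- The label set 𝐔: `below` is U_{<c₀}, `above` is U_{c_α<}, and `atc c` is U_c. -/
inductive ULab where
  | below : ULab
  | above : ULab
  | atc : ℤ → ULab

/-- `inBag v a` : the vertex `a` lies in the bag of the node `v`
(i.e. `a` lies at `v` or at the parent of `v`). -/
def inBag (v : Node n) (a : Vtx n R) : Prop := a.1 = v ∨ IsChild v a.1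

/-- A framified constraint graph: a tree-structured constraint graph together with
a total labeling by 𝐔 (with the integer labels in `[c₀, c_α]`), such that every
edge has both endpoints in a common bag, and for all distinct vertices in a common
bag conditions (1)–(5) of the definition of frames hold. -/
structure Framified (n : ℕ) (R : Type) (c₀ cα : ℤ) extends CGraph n R where
  lab : Vtx n R → ULab
  lab_mem : ∀ (v : Vtx n R) (c : ℤ), lab v = ULab.atc c → c₀ ≤ c ∧ c ≤ cα
  edge_bag : ∀ a b : Vtx n R, lt a b ∨ eqe a b → ∃ v : Node n, inBag v a ∧ inBag v b
  complete : ∀ (v : Node n) (a b : Vtx n R), inBag v a → inBag v b → a ≠ b →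
    lt a b ∨ lt b a ∨ eqe a b ∨ eqe b a
  no_bag_cycle : ∀ v : Node n,
    ¬ ∃ (k : ℕ) (p : ℕ → Vtx n R), 0 < k ∧ p 0 = p k ∧
      (∀ i < k, lt (p i) (p (i + 1)) ∨ eqe (p i) (p (i + 1))) ∧
      (∃ i < k, lt (p i) (p (i + 1))) ∧ (∀ i ≤ k, inBag v (p i))
  eq_symm : ∀ (v : Node n) (a b : Vtx n R), inBag v a → inBag v b → a ≠ b →
    eqe a b → eqe b a
  eq_lab : ∀ (v : Node n) (a b : Vtx n R), inBag v a → inBag v b → a ≠ b →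
    eqe a b → lab a = lab b
  lab_eq : ∀ (v : Node n) (a b : Vtx n R), inBag v a → inBag v b → a ≠ b →
    ∀ c : ℤ, lab a = ULab.atc c → lab b = ULab.atc c → eqe a b
  lt_lab : ∀ (v : Node n) (a b : Vtx n R), inBag v a → inBag v b → a ≠ b →
    lt a b → lab a = ULab.below ∨ lab b = ULab.above ∨
      ∃ c c' : ℤ, lab a = ULab.atc c ∧ lab b = ULab.atc c' ∧ c < c'

/-- Embeddability into ℤ of a framified constraint graph. -/
def Framified.Embeddable {c₀ cα : ℤ} (G : Framified n R c₀ cα) : Prop :=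
  ∃ κ : Vtx n R → ℤ,
    (∀ a b : Vtx n R, G.lt a b → κ a < κ b) ∧
    (∀ a b : Vtx n R, G.eqe a b → κ a = κ b) ∧
    (∀ (v : Vtx n R) (c : ℤ), G.lab v = ULab.atc c → κ v = c)


section AuxNoStrictCycle

variable {n : ℕ} {R : Type} {c₀ cα : ℤ}

private lemma concat_left_eq {α} {u v : List α} {x y : α} (h : u ++ [x] = v ++ [y]) : u = v := by
  have := congrArg List.dropLast h
  simpa using this

/-- A closed segment `q s, …, q e` lying in the bag of `v` with a strict edge
contradicts `no_bag_cycle`. -/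
private lemma bag_closed (G : Framified n R c₀ cα) (v : Node n) (q : ℕ → Vtx n R) (s e : ℕ)
    (hse : s < e)
    (hpath : ∀ m, s ≤ m → m < e → G.lt (q m) (q (m+1)) ∨ G.eqe (q m) (q (m+1)))
    (hbag : ∀ m, s ≤ m → m ≤ e → inBag v (q m))
    (hcl : q e = q s)
    (hstrict : ∃ m, s ≤ m ∧ m < e ∧ G.lt (q m) (q (m+1))) : False := by
  apply G.no_bag_cycle v
  refine ⟨e - s, fun t => q (s + t), by omega, ?_, ?_, ?_, ?_⟩
  · show q (s + 0) = q (s + (e - s))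
    rw [show s + 0 = s from rfl, show s + (e - s) = e by omega, hcl]
  · intro i hi
    show G.lt (q (s + i)) (q (s + (i+1))) ∨ G.eqe (q (s + i)) (q (s + (i+1)))
    rw [show s + (i + 1) = (s + i) + 1 by omega]
    exact hpath (s + i) (by omega) (by omega)
  · obtain ⟨m, hm1, hm2, hm3⟩ := hstrict
    refine ⟨m - s, by omega, ?_⟩
    show G.lt (q (s + (m - s))) (q (s + (m - s + 1)))
    rw [show s + (m - s) = m by omega, show s + (m - s + 1) = m + 1 by omega]
    exact hm3
  · intro i hi
    exact hbag (s + i) (by omega) (by omega)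

/-- An open segment in a bag whose endpoints are joined by a closing edge
contradicts `no_bag_cycle`. -/
private lemma bag_open (G : Framified n R c₀ cα) (v : Node n) (q : ℕ → Vtx n R) (s e : ℕ)
    (hse : s < e)
    (hpath : ∀ m, s ≤ m → m < e → G.lt (q m) (q (m+1)) ∨ G.eqe (q m) (q (m+1)))
    (hbag : ∀ m, s ≤ m → m ≤ e → inBag v (q m))
    (hcl : G.lt (q e) (q s) ∨ G.eqe (q e) (q s))
    (hstrict : G.lt (q e) (q s) ∨ ∃ m, s ≤ m ∧ m < e ∧ G.lt (q m) (q (m+1))) : False := by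
  set q' : ℕ → Vtx n R := fun m => if m ≤ e then q m else q s with hq'
  have hq'eq : ∀ m, m ≤ e → q' m = q m := by
    intro m hm; simp [hq', hm]
  have hq'e1 : q' (e + 1) = q s := by simp [hq']
  apply bag_closed G v q' s (e + 1) (by omega)
  · intro m hm1 hm2
    rcases Nat.lt_or_ge m e with h | h
    · rw [hq'eq m (by omega), hq'eq (m+1) (by omega)]
      exact hpath m hm1 h
    · have hme : m = e := by omega
      subst hme
      rw [hq'eq m le_rfl, hq'e1]
      exact hcl
  · intro m hm1 hm2
    rcases Nat.lt_or_ge m (e + 1) with h | h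
    · rw [hq'eq m (by omega)]; exact hbag m hm1 (by omega)
    · have hme : m = e + 1 := by omega
      subst hme
      rw [hq'e1]; exact hbag s le_rfl (by omega)
  · rw [hq'e1, hq'eq s (by omega)]
  · rcases hstrict with h | ⟨m, hm1, hm2, hm3⟩
    · refine ⟨e, le_of_lt hse, by omega, ?_⟩
      rw [hq'eq e le_rfl, hq'e1]; exact h
    · refine ⟨m, hm1, by omega, ?_⟩
      rw [hq'eq m (by omega), hq'eq (m+1) (by omega)]; exact hm3

/-- Shortcutting a cycle: delete the part of the cycle strictly between
`s` and `s + 1 + d` and connect `q s` directly to `q (s + 1 + d)`. -/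
private lemma shortcut (G : Framified n R c₀ cα) (q : ℕ → Vtx n R) (k s d : ℕ)
    (hd : 1 ≤ d) (hsd : s + d < k)
    (hcyc : q 0 = q k)
    (hpath : ∀ i, G.lt (q i) (q (i+1)) ∨ G.eqe (q i) (q (i+1)))
    (hstep : G.lt (q s) (q (s+1+d)) ∨ G.eqe (q s) (q (s+1+d)))
    (hstrict : G.lt (q s) (q (s+1+d)) ∨
      ∃ m, m < k ∧ G.lt (q m) (q (m+1)) ∧ (m < s ∨ s + d < m)) :
    ∃ k₂, k₂ < k ∧ 0 < k₂ ∧ ∃ r : ℕ → Vtx n R, r 0 = r k₂ ∧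
      (∀ i < k₂, G.lt (r i) (r (i+1)) ∨ G.eqe (r i) (r (i+1))) ∧
      ∃ i < k₂, G.lt (r i) (r (i+1)) := by
  set k₂ := k - d with hk₂
  set r : ℕ → Vtx n R := fun t => if t ≤ s then q t else q (t + d) with hr
  have hrlow : ∀ t, t ≤ s → r t = q t := by intro t ht; simp [hr, ht]
  have hrhigh : ∀ t, s < t → r t = q (t + d) := by
    intro t ht; simp [hr, Nat.not_le.mpr ht]
  have hsk₂ : s < k₂ := by omega
  refine ⟨k₂, by omega, by omega, r, ?_, ?_, ?_⟩
  · rw [hrlow 0 (by omega), hrhigh k₂ hsk₂, show k₂ + d = k by omega, hcyc]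
  · intro i hi
    rcases Nat.lt_or_ge i s with h | h
    · rw [hrlow i (by omega), hrlow (i+1) (by omega)]
      exact hpath i
    · rcases Nat.eq_or_lt_of_le h with h' | h'
      · rw [hrlow i (by omega), hrhigh (i+1) (by omega), ← h']
        exact hstep
      · rw [hrhigh i h', hrhigh (i+1) (by omega),
          show i + 1 + d = i + d + 1 by omega]
        exact hpath (i + d)
  · rcases hstrict with h | ⟨m, hm1, hm2, hm3⟩
    · refine ⟨s, hsk₂, ?_⟩
      rw [hrlow s le_rfl, hrhigh (s+1) (by omega)]
      exact h
    · rcases hm3 with h | h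
      · refine ⟨m, by omega, ?_⟩
        rw [hrlow m (by omega), hrlow (m+1) (by omega)]
        exact hm2
      · refine ⟨m - d, by omega, ?_⟩
        rw [hrhigh (m - d) (by omega), hrhigh (m - d + 1) (by omega),
          show m - d + d = m by omega, show m - d + 1 + d = m + 1 by omega]
        exact hm2

private lemma no_strict_cycle_aux (G : Framified n R c₀ cα) :
    ∀ k, 0 < k → ∀ p : ℕ → Vtx n R, p 0 = p k →
      (∀ i < k, G.lt (p i) (p (i+1)) ∨ G.eqe (p i) (p (i+1))) →
      (∃ i < k, G.lt (p i) (p (i+1))) → False := by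
  intro k
  induction k using Nat.strong_induction_on with
  | _ k IH =>
  intro hk p hcyc hpath hstrict
  classical
  obtain ⟨m₀, hm₀mem, hm₀max⟩ :=
    (Finset.range (k+1)).exists_max_image (fun i => (p i).1.length) ⟨0, by simp⟩
  set v : Node n := (p m₀).1 with hv
  have hmax : ∀ t, t ≤ k → (p t).1.length ≤ v.length := by
    intro t ht
    exact hm₀max t (Finset.mem_range.mpr (by omega))
  by_cases hall : ∀ m ≤ k, inBag v (p m)
  · exact G.no_bag_cycle v ⟨k, p, hk, hcyc, hpath, hstrict, hall⟩
  push_neg at hall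
  obtain ⟨m₁, hm₁k, hm₁⟩ := hall
  obtain ⟨m, hmk, hm⟩ : ∃ m, m < k ∧ ¬ inBag v (p m) := by
    rcases Nat.eq_or_lt_of_le hm₁k with h | h
    · exact ⟨0, hk, by rw [hcyc, ← h]; exact hm₁⟩
    · exact ⟨m₁, h, hm₁⟩
  -- the rotated cycle
  set q : ℕ → Vtx n R := fun i => p ((m + i) % k) with hq
  have hmod : ∀ a b : ℕ, (a + b % k) % k = (a + b) % k := by
    intro a b
    conv_lhs => rw [Nat.add_mod, Nat.mod_mod_of_dvd _ dvd_rfl]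
    conv_rhs => rw [Nat.add_mod]
  have hqp : ∀ i, q (i+1) = p ((m + i) % k + 1) := by
    intro i
    have ht : (m + i) % k < k := Nat.mod_lt _ hk
    show p ((m + (i+1)) % k) = p ((m + i) % k + 1)
    have h1 : (m + (i+1)) % k = ((m + i) % k + 1) % k := by
      rw [show m + (i+1) = (m+i) + 1 by omega]
      conv_lhs => rw [Nat.add_mod]
      conv_rhs => rw [Nat.add_mod, Nat.mod_mod_of_dvd _ dvd_rfl]
    rcases Nat.lt_or_ge ((m + i) % k + 1) k with h2 | h2
    · rw [h1, Nat.mod_eq_of_lt h2]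
    · have h3 : (m + i) % k + 1 = k := by omega
      rw [h1, h3, Nat.mod_self]
      exact hcyc
  have hqedge : ∀ i, G.lt (q i) (q (i+1)) ∨ G.eqe (q i) (q (i+1)) := by
    intro i
    rw [hqp i]
    exact hpath ((m + i) % k) (Nat.mod_lt _ hk)
  have hqlen : ∀ i, (q i).1.length ≤ v.length := by
    intro i
    exact hmax _ (le_of_lt (Nat.mod_lt _ hk))
  have hqcyc : q 0 = q k := by
    show p ((m + 0) % k) = p ((m + k) % k)
    rw [Nat.add_zero, Nat.add_mod_right]
  have hq0 : q 0 = p m := by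
    show p ((m + 0) % k) = p m
    rw [Nat.add_zero, Nat.mod_eq_of_lt hmk]
  have hq0v : ¬ inBag v (q 0) := by rw [hq0]; exact hm
  have hq0ne : (q 0).1 ≠ v := fun h => hq0v (Or.inl h)
  -- transfer indices from p to q
  have htrans : ∀ t, t < k →
      q ((t + (k - m)) % k) = p t ∧ q ((t + (k - m)) % k + 1) = p (t+1) := by
    intro t ht
    have h1 : (m + (t + (k - m)) % k) % k = t := by
      rw [hmod, show m + (t + (k - m)) = t + k by omega, Nat.add_mod_right,
        Nat.mod_eq_of_lt ht]
    constructor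
    · show p ((m + (t + (k - m)) % k) % k) = p t
      rw [h1]
    · rw [hqp, h1]
  -- a strict edge of q
  have hqstrict : ∃ i, i < k ∧ G.lt (q i) (q (i+1)) := by
    obtain ⟨t, ht, hlt⟩ := hstrict
    obtain ⟨h1, h2⟩ := htrans t ht
    exact ⟨(t + (k - m)) % k, Nat.mod_lt _ hk, by rw [h1, h2]; exact hlt⟩
  -- existence of an index of q at node v
  obtain ⟨w₀, hw₀k, hw₀⟩ : ∃ w, w < k ∧ (q w).1 = v := by
    obtain ⟨t, htk, htv⟩ : ∃ t, t < k ∧ (p t).1 = v := by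
      have hm₀k : m₀ ≤ k := Nat.lt_succ_iff.mp (Finset.mem_range.mp hm₀mem)
      rcases Nat.eq_or_lt_of_le hm₀k with h | h
      · refine ⟨0, hk, ?_⟩
        rw [hcyc, ← h]
      · exact ⟨m₀, h, hv.symm⟩
    obtain ⟨h1, _⟩ := htrans t htk
    exact ⟨(t + (k - m)) % k, Nat.mod_lt _ hk, by rw [h1]; exact htv⟩
  have hexv : ∃ i, (q i).1 = v := ⟨w₀, hw₀⟩
  have hiv := Nat.find_spec hexv
  have hipos : 0 < Nat.find hexv := Nat.pos_of_ne_zero (fun h => hq0ne (h ▸ hiv))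
  have hik : Nat.find hexv < k := lt_of_le_of_lt (Nat.find_min' hexv hw₀) hw₀k
  obtain ⟨s, hs⟩ : ∃ s, Nat.find hexv = s + 1 := ⟨Nat.find hexv - 1, by omega⟩
  rw [hs] at hiv hik
  have hsne : ∀ t, t ≤ s → (q t).1 ≠ v := fun t ht => Nat.find_min hexv (by omega)
  -- the run of indices at node v
  have hwit2 : (q (s + 1 + (k - s - 2) + 1)).1 ≠ v := by
    rw [show s + 1 + (k - s - 2) + 1 = k by omega, ← hqcyc]
    exact hq0ne
  have hexe : ∃ t, (q (s + 1 + t + 1)).1 ≠ v := ⟨_, hwit2⟩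
  obtain ⟨t, htv, hrun', htle⟩ : ∃ t, (q (s + 1 + t + 1)).1 ≠ v ∧
      (∀ r, r < t → (q (s + 1 + r + 1)).1 = v) ∧ t ≤ k - s - 2 := by
    refine ⟨Nat.find hexe, Nat.find_spec hexe, ?_, Nat.find_min' hexe hwit2⟩
    intro r hr
    by_contra h
    exact Nat.find_min hexe hr h
  have hrun : ∀ r, r ≤ t → (q (s + 1 + r)).1 = v := by
    intro r hr
    cases r with
    | zero => exact hiv
    | succ r' => exact hrun' r' (by omega)
  -- identify the parent node u
  have hvne : v ≠ [] := by
    intro h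
    have h0 := hqlen 0
    rw [h, List.length_nil] at h0
    exact hq0ne (by rw [List.length_eq_zero_iff.mp (Nat.le_zero.mp h0), h])
  set u := v.dropLast with hu
  have hvu : v = u ++ [v.getLast hvne] := (List.dropLast_append_getLast hvne).symm
  have hchild : IsChild v u := ⟨v.getLast hvne, hvu⟩
  have hparent : ∀ w : Node n, IsChild v w → w = u := by
    rintro w ⟨γ, hγ⟩
    exact concat_left_eq (hγ.symm.trans hvu)
  -- the endpoints of the run lie at u
  have hsu : (q s).1 = u := by
    rcases G.local_edges (q s) (q (s+1)) (hqedge s) with h | h | h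
    · exact absurd (h.trans hiv) (hsne s le_rfl)
    · rw [hiv] at h
      exact hparent _ h
    · exfalso
      obtain ⟨γ, hγ⟩ := h
      have hl := hqlen s
      rw [hγ, hiv, List.length_append, List.length_singleton] at hl
      omega
  have hju : (q (s + 1 + t)).1 = v := hrun t le_rfl
  have heu : (q (s + 1 + t + 1)).1 = u := by
    rcases G.local_edges (q (s + 1 + t)) (q (s + 1 + t + 1)) (hqedge _) with h | h | h
    · exact absurd (h.symm.trans hju) htv
    · exfalso
      obtain ⟨γ, hγ⟩ := h
      have hl := hqlen (s + 1 + t + 1)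
      rw [hγ, hju, List.length_append, List.length_singleton] at hl
      omega
    · rw [hju] at h
      exact hparent _ h
  set e := s + 1 + t + 1 with he
  -- e < k
  have hek : e < k := by
    rcases Nat.lt_or_ge e k with h | h
    · exact h
    · exfalso
      apply hq0v
      rw [hqcyc, ← show e = k by omega]
      exact Or.inr (by rw [heu]; exact hchild)
  -- the whole segment lies in the bag of v
  have hbagseg : ∀ m', s ≤ m' → m' ≤ e → inBag v (q m') := by
    intro m' h1 h2
    rcases Nat.eq_or_lt_of_le h1 with h | h
    · right
      rw [← h, hsu]
      exact hchild
    · rcases Nat.eq_or_lt_of_le h2 with h' | h'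
      · right
        rw [h', heu]
        exact hchild
      · left
        have hr := hrun (m' - (s+1)) (by omega)
        rwa [show s + 1 + (m' - (s+1)) = m' by omega] at hr
  have hbs : inBag v (q s) := hbagseg s le_rfl (by omega)
  have hbe : inBag v (q e) := hbagseg e (by omega) le_rfl
  by_cases hseg : ∃ m', s ≤ m' ∧ m' < e ∧ G.lt (q m') (q (m'+1))
  · by_cases hab : q s = q e
    · exact bag_closed G v q s e (by omega) (fun m' _ _ => hqedge m') hbagseg hab.symm hseg
    · have hlt : G.lt (q s) (q e) := by
        rcases G.complete v (q s) (q e) hbs hbe hab with h | h | h | h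
        · exact h
        · exact (bag_open G v q s e (by omega) (fun m' _ _ => hqedge m') hbagseg
            (Or.inl h) (Or.inr hseg)).elim
        · exact (bag_open G v q s e (by omega) (fun m' _ _ => hqedge m') hbagseg
            (Or.inr (G.eq_symm v (q s) (q e) hbs hbe hab h)) (Or.inr hseg)).elim
        · exact (bag_open G v q s e (by omega) (fun m' _ _ => hqedge m') hbagseg
            (Or.inr h) (Or.inr hseg)).elim
      obtain ⟨k₂, h1, h2, r, h3, h4, h5⟩ :=
        shortcut G q k s (e - s - 1) (by omega) (by omega) hqcyc hqedge
          (by rw [show s + 1 + (e - s - 1) = e by omega]; exact Or.inl hlt)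
          (by rw [show s + 1 + (e - s - 1) = e by omega]; exact Or.inl hlt)
      exact IH k₂ h1 h2 r h3 h4 h5
  · push_neg at hseg
    obtain ⟨w, hwk, hwlt⟩ := hqstrict
    have hwout : w < s ∨ e ≤ w := by
      by_contra h
      push_neg at h
      exact hseg w (by omega) (by omega) hwlt
    by_cases hab : q s = q e
    · -- delete the closed segment
      have hstep : G.lt (q s) (q (s + 1 + (e - s))) ∨ G.eqe (q s) (q (s + 1 + (e - s))) := by
        rw [show s + 1 + (e - s) = e + 1 by omega, hab]
        exact hqedge e
      have hstr : G.lt (q s) (q (s + 1 + (e - s))) ∨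
          ∃ m'', m'' < k ∧ G.lt (q m'') (q (m''+1)) ∧ (m'' < s ∨ s + (e - s) < m'') := by
        rcases hwout with h | h
        · exact Or.inr ⟨w, hwk, hwlt, Or.inl h⟩
        · rcases Nat.eq_or_lt_of_le h with h' | h'
          · left
            rw [show s + 1 + (e - s) = e + 1 by omega, hab, h']
            exact hwlt
          · exact Or.inr ⟨w, hwk, hwlt, Or.inr (by omega)⟩
      obtain ⟨k₂, h1, h2, r, h3, h4, h5⟩ :=
        shortcut G q k s (e - s) (by omega) (by omega) hqcyc hqedge hstep hstr
      exact IH k₂ h1 h2 r h3 h4 h5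
    · have hedge_ab : G.lt (q s) (q e) ∨ G.eqe (q s) (q e) := by
        rcases G.complete v (q s) (q e) hbs hbe hab with h | h | h | h
        · exact Or.inl h
        · exact (bag_open G v q s e (by omega) (fun m' _ _ => hqedge m') hbagseg
            (Or.inl h) (Or.inl h)).elim
        · exact Or.inr h
        · exact Or.inr (G.eq_symm v (q e) (q s) hbe hbs (Ne.symm hab) h)
      obtain ⟨k₂, h1, h2, r, h3, h4, h5⟩ :=
        shortcut G q k s (e - s - 1) (by omega) (by omega) hqcyc hqedge
          (by rw [show s + 1 + (e - s - 1) = e by omega]; exact hedge_ab)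
          (Or.inr ⟨w, hwk, hwlt, by omega⟩)
      exact IH k₂ h1 h2 r h3 h4 h5

end AuxNoStrictCycle

/-- a framified constraint graph contains no strict cycle. -/
theorem framified_no_strict_cycle (n : ℕ) (hn : 1 ≤ n)
    (R : Type) [Fintype R] [Nonempty R] (c₀ cα : ℤ) (hc : c₀ ≤ cα)
    (G : Framified n R c₀ cα) :
    ¬ ∃ (k : ℕ) (p : ℕ → Vtx n R), 0 < k ∧ p 0 = p k ∧
        G.toCGraph.IsPathTo p k ∧ ∃ i < k, G.lt (p i) (p (i + 1)) := by
  rintro ⟨k, p, hk, hcyc, hpath, hstrict⟩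
  exact no_strict_cycle_aux G k hk p hcyc hpath hstrict

end ConstraintGraphs
end

section
/- Let G be a tree-structured constraint graph with a partial labeling λ all of whose values lie in the interval [c₀, c_α], and suppose G is embeddable into ℤ. Then G has a framification: there exist relations E'_< ⊇ E_< and E'_= ⊇ E_= on V and a total labeling U : V → U such that (V, E'_<, E'_=) together with U is a framified constraint graph and U(v) = U_c whenever λ(v) = c. -/
namespace ConstraintGraphs

variable {n : ℕ} {R : Type}

/-- a tree-structured constraint graph with a partial labeling whose
values lie in `[c₀, c_α]` that is embeddable into ℤ has a framification: larger
edge relations and a total 𝐔-labeling forming a framified constraint graph whose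
labeling agrees with the partial labeling. -/
theorem embeddable_has_framification (n : ℕ) (hn : 1 ≤ n)
    (R : Type) [Fintype R] [Nonempty R] (c₀ cα : ℤ) (hc : c₀ ≤ cα)
    (G : CGraph n R) (lab : Vtx n R → Option ℤ)
    (hrange : ∀ (v : Vtx n R) (c : ℤ), lab v = some c → c₀ ≤ c ∧ c ≤ cα)
    (hemb : EmbeddableWith G lab) :
    ∃ G' : Framified n R c₀ cα,
      (∀ a b : Vtx n R, G.lt a b → G'.lt a b) ∧
      (∀ a b : Vtx n R, G.eqe a b → G'.eqe a b) ∧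
      (∀ (v : Vtx n R) (c : ℤ), lab v = some c → G'.lab v = ULab.atc c) := by

  classical
  obtain ⟨κ, hκlt, hκeq, hκlab⟩ := hemb
  -- the total labeling determined by κ
  set L : Vtx n R → ULab := fun v =>
    if κ v < c₀ then ULab.below else if cα < κ v then ULab.above else ULab.atc (κ v) with hL
  -- common bag relation
  set Bag : Vtx n R → Vtx n R → Prop := fun a b => ∃ v : Node n, inBag v a ∧ inBag v b with hB
  have hLocBag : ∀ a b : Vtx n R,
      (a.1 = b.1 ∨ IsChild b.1 a.1 ∨ IsChild a.1 b.1) → Bag a b := by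
    rintro a b (h | ⟨γ, hγ⟩ | ⟨γ, hγ⟩)
    · exact ⟨a.1, Or.inl rfl, Or.inl h.symm⟩
    · exact ⟨b.1, Or.inr ⟨γ, hγ⟩, Or.inl rfl⟩
    · exact ⟨a.1, Or.inl rfl, Or.inr ⟨γ, hγ⟩⟩
  have hBagLoc : ∀ a b : Vtx n R, Bag a b →
      a.1 = b.1 ∨ IsChild b.1 a.1 ∨ IsChild a.1 b.1 := by
    rintro a b ⟨v, (ha | ⟨γ, hγ⟩), (hb | ⟨δ, hδ⟩)⟩
    · exact Or.inl (ha.trans hb.symm)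
    · exact Or.inr (Or.inr ⟨δ, by rw [ha, hδ]⟩)
    · exact Or.inr (Or.inl ⟨γ, by rw [hb, hγ]⟩)
    · left
      have := hγ.symm.trans hδ
      exact (List.append_inj' this rfl).1
  refine ⟨{ lt := fun a b => Bag a b ∧ κ a < κ b
            eqe := fun a b => Bag a b ∧ κ a = κ b
            local_edges := ?_
            lab := L
            lab_mem := ?_
            edge_bag := ?_
            complete := ?_
            no_bag_cycle := ?_
            eq_symm := ?_
            eq_lab := ?_
            lab_eq := ?_
            lt_lab := ?_ }, ?_, ?_, ?_⟩
  · rintro a b (⟨hb, _⟩ | ⟨hb, _⟩) <;> exact hBagLoc a b hb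
  · intro v c hvc
    simp only [hL] at hvc
    split_ifs at hvc with h1 h2 <;> cases hvc
    exact ⟨le_of_not_gt h1, le_of_not_gt h2⟩
  · rintro a b (⟨⟨v, hv⟩, _⟩ | ⟨⟨v, hv⟩, _⟩) <;> exact ⟨v, hv⟩
  · intro v a b ha hb hab
    rcases lt_trichotomy (κ a) (κ b) with h | h | h
    · exact Or.inl ⟨⟨v, ha, hb⟩, h⟩
    · exact Or.inr (Or.inr (Or.inl ⟨⟨v, ha, hb⟩, h⟩))
    · exact Or.inr (Or.inl ⟨⟨v, hb, ha⟩, h⟩)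
  · rintro v ⟨k, p, hk, hpk, hstep, ⟨i0, hi0, _, hlt0⟩, _⟩
    have hle : ∀ i < k, κ (p i) ≤ κ (p (i + 1)) := by
      intro i hi
      rcases hstep i hi with ⟨_, h⟩ | ⟨_, h⟩
      · exact le_of_lt h
      · exact le_of_eq h
    have mono : ∀ b, b ≤ k → ∀ a ≤ b, κ (p a) ≤ κ (p b) := by
      intro b hbk
      induction b with
      | zero => intro a ha; simp [Nat.le_zero.mp ha]
      | succ m ih =>
        intro a ha
        rcases Nat.le_succ_iff.mp ha with h | h
        · exact le_trans (ih (le_trans (Nat.le_succ m) hbk) a h)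
            (hle m (lt_of_lt_of_le (Nat.lt_succ_self m) hbk))
        · simp [h]
    have h1 : κ (p 0) ≤ κ (p i0) := mono i0 (le_of_lt hi0) 0 (Nat.zero_le _)
    have h2 : κ (p (i0 + 1)) ≤ κ (p k) := mono k le_rfl (i0 + 1) hi0
    have : κ (p 0) < κ (p k) := lt_of_le_of_lt h1 (lt_of_lt_of_le hlt0 h2)
    rw [hpk] at this
    exact lt_irrefl _ this
  · rintro v a b _ _ _ ⟨⟨u, hu1, hu2⟩, he⟩
    exact ⟨⟨u, hu2, hu1⟩, he.symm⟩
  · rintro v a b _ _ _ ⟨_, he⟩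
    simp only [hL, he]
  · rintro v a b ha hb _ c hac hbc
    refine ⟨⟨v, ha, hb⟩, ?_⟩
    simp only [hL] at hac hbc
    split_ifs at hac with h1 h2 <;> cases hac
    split_ifs at hbc with h3 h4 <;>
      first
        | cases hbc
        | exact ((ULab.atc.injEq _ _).mp hbc).symm
  · rintro v a b _ _ _ ⟨_, hab⟩
    simp only [hL]
    by_cases h1 : κ a < c₀
    · rw [if_pos h1]; exact Or.inl rfl
    · by_cases h2 : cα < κ b
      · have hb1 : ¬ κ b < c₀ := not_lt.mpr (le_trans hc (le_of_lt h2))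
        rw [if_neg hb1, if_pos h2]
        exact Or.inr (Or.inl rfl)
      · have ha2 : ¬ cα < κ a := fun h => h2 (h.trans hab)
        have hb1 : ¬ κ b < c₀ := fun h => h1 (hab.trans h)
        rw [if_neg h1, if_neg ha2, if_neg hb1, if_neg h2]
        exact Or.inr (Or.inr ⟨κ a, κ b, rfl, rfl, hab⟩)
  · intro a b h
    exact ⟨hLocBag a b (G.local_edges a b (Or.inl h)), hκlt a b h⟩
  · intro a b h
    exact ⟨hLocBag a b (G.local_edges a b (Or.inr h)), hκeq a b h⟩
  · intro v c hvc
    have hκ := hκlab v c hvc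
    obtain ⟨h1, h2⟩ := hrange v c hvc
    simp only [hL, hκ, not_lt.mpr h1, not_lt.mpr h2, if_false]


end ConstraintGraphs
end

section
/- Let G be a framified constraint graph and let u ∈ [n]* and x, y ∈ R satisfy ℓ((u,x),(u,y)) = ∞. Then for every N ∈ ℕ there is a down-then-up path in G from (u,x) to (u,y) of strict length at least N. -/
namespace ConstraintGraphs

variable {n : ℕ} {R : Type}

/-- `ℓ((u,x),(u,y)) = ∞` : for every `m` there is a cycle-free path in `G` from
`(u,x)` to `(u,y)` of strict length at least `m` staying in the subtree rooted at `u`. -/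
def EllInf {c₀ cα : ℤ} (G : Framified n R c₀ cα) (u : Node n) (x y : R) : Prop :=
  ∀ m : ℕ, ∃ (k : ℕ) (p : ℕ → Vtx n R),
    p 0 = (u, x) ∧ p k = (u, y) ∧ G.toCGraph.IsPathTo p k ∧
    (∀ i j : ℕ, i ≤ k → j ≤ k → p i = p j → i = j) ∧
    (∀ i ≤ k, u <+: (p i).1) ∧
    m ≤ G.toCGraph.strictLen p k

/-- A finite path `p 0, …, p k` goes down-then-up: up to some index `j < k` every
step goes to a child, and after `j` every step goes to the parent. -/
def DownThenUp (p : ℕ → Vtx n R) (k : ℕ) : Prop :=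
  ∃ j : ℕ, j < k ∧ (∀ i < j, IsChild (p (i + 1)).1 (p i).1) ∧
    (∀ i : ℕ, j < i → i < k → IsChild (p i).1 (p (i + 1)).1)

/-!
A cycle-free path from `(u,x)` to `(u,y)` inside the subtree of `u` collapses, bag by bag, to a
single edge between its endpoints, strict as soon as the path uses a strict edge. Since it
visits the node `u` at most `|R|` times, a path with many strict edges has an excursion into a
child subtree that still has many strict edges. Recursing into that excursion and wrapping the
resulting down-then-up path with the two edges joining the excursion to `(u,x)` and `(u,y)`
gives a down-then-up path; whenever the excursion misses some strict edge of the path, one of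
the two wrapping edges is strict, so the strict length grows with the depth of the recursion.
-/

namespace CGraph

variable (G : CGraph n R)

def Edge (a b : Vtx n R) : Prop := G.lt a b ∨ G.eqe a b

def Precedes (s : Prop) (a b : Vtx n R) : Prop :=
  (a = b ∧ ¬ s) ∨ (G.Edge a b ∧ (s → G.lt a b))

section StrictLength

variable (p q : ℕ → Vtx n R)

open Classical in
theorem strictLen_eq_count (k : ℕ) :
    G.strictLen p k = Nat.count (fun i => G.lt (p i) (p (i + 1))) k := by
  rw [Nat.count_eq_card_filter_range, strictLen, ← Set.ncard_coe_finset]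
  congr 1
  ext i
  simp

@[simp]
theorem strictLen_zero : G.strictLen p 0 = 0 := by
  simp [strictLen_eq_count]

theorem strictLen_le (k : ℕ) : G.strictLen p k ≤ k := by
  classical
  rw [strictLen_eq_count]
  exact Nat.count_le _

theorem strictLen_add (a b : ℕ) :
    G.strictLen p (a + b) = G.strictLen p a + G.strictLen (fun i => p (a + i)) b := by
  simp only [strictLen_eq_count, Nat.count_add]
  rfl

theorem strictLen_congr {k : ℕ} (h : ∀ i ≤ k, p i = q i) :
    G.strictLen p k = G.strictLen q k := by
  unfold strictLen
  congr 1
  ext i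
  simp only [Set.mem_ofPred_eq, and_congr_right_iff]
  intro hi
  rw [h i hi.le, h (i + 1) hi]

theorem strictLen_one_pos_iff : 0 < G.strictLen p 1 ↔ G.lt (p 0) (p 1) := by
  rw [strictLen_eq_count, Nat.count_one]
  split_ifs with h <;> simp [h]

open Classical in
theorem strictLen_add_two (m : ℕ) :
    G.strictLen p (m + 2) = (if G.lt (p 0) (p 1) then 1 else 0) +
      G.strictLen (fun i => p (i + 1)) m + (if G.lt (p (m + 1)) (p (m + 2)) then 1 else 0) := by
  rw [strictLen_eq_count, strictLen_eq_count, Nat.count_succ', Nat.count_succ]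
  simp only [zero_add]
  ac_rfl

theorem strictLen_add_two_le (m : ℕ) :
    G.strictLen p (m + 2) ≤ G.strictLen (fun i => p (i + 1)) m + 2 := by
  classical
  rw [strictLen_add_two]
  split_ifs <;> omega

end StrictLength

structure IsSubtreePath (w : Node n) (p : ℕ → Vtx n R) (k : ℕ) : Prop where
  isPathTo : G.IsPathTo p k
  injective : ∀ i j, i ≤ k → j ≤ k → p i = p j → i = j
  subtree : ∀ i ≤ k, w <+: (p i).1
  source : (p 0).1 = w
  target : (p k).1 = w

end CGraph

def TreeAdj (x y : Node n) : Prop := x = y ∨ IsChild y x ∨ IsChild x y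

section Tree

variable {w x y : Node n} {γ : Fin n}

theorem TreeAdj.exists_eq_child (h : TreeAdj x y) (hxy : x <+: y) (hne : y ≠ x) :
    ∃ γ, y = x ++ [γ] := by
  rcases h with rfl | h | ⟨δ, rfl⟩
  · exact (hne rfl).elim
  · exact h
  · simpa using hxy.length_le

theorem TreeAdj.prefix_of_prefix (h : TreeAdj x y) (hx : w ++ [γ] <+: x) (hy : y ≠ w) :
    w ++ [γ] <+: y := by
  rcases h with rfl | ⟨δ, rfl⟩ | ⟨δ, rfl⟩
  · exact hx
  · exact hx.trans (List.prefix_append _ _)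
  · rcases List.prefix_concat_iff.mp hx with h | h
    · exact (hy (by simp_all)).elim
    · exact h

theorem TreeAdj.eq_of_prefix (h : TreeAdj x w) (hx : w ++ [γ] <+: x) : x = w ++ [γ] := by
  have hlen := hx.length_le
  rcases h with rfl | ⟨δ, rfl⟩ | ⟨δ, rfl⟩
  · simp at hlen
  · simp at hlen
  · exact (hx.eq_of_length (by simp)).symm

end Tree

namespace CGraph.IsSubtreePath

variable {G : CGraph n R} {w : Node n} {p : ℕ → Vtx n R} {k : ℕ}

theorem ne (hp : G.IsSubtreePath w p k) {i j : ℕ} (hi : i ≤ k) (hj : j ≤ k) (hij : i ≠ j) :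
    p i ≠ p j :=
  fun h => hij (hp.injective i j hi hj h)

theorem treeAdj (hp : G.IsSubtreePath w p k) {i : ℕ} (hi : i < k) :
    TreeAdj (p i).1 (p (i + 1)).1 :=
  G.local_edges _ _ (hp.isPathTo i hi)

theorem take {r l : ℕ} (hp : G.IsSubtreePath w p (r + l)) (hr : (p r).1 = w) :
    G.IsSubtreePath w p r where
  isPathTo i hi := hp.isPathTo i (by omega)
  injective i j hi hj := hp.injective i j (by omega) (by omega)
  subtree i hi := hp.subtree i (by omega)
  source := hp.source
  target := hr

theorem shift {r l : ℕ} (hp : G.IsSubtreePath w p (r + l)) (hr : (p r).1 = w) :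
    G.IsSubtreePath w (fun i => p (r + i)) l where
  isPathTo i hi := hp.isPathTo (r + i) (by omega)
  injective i j hi hj h := by have := hp.injective _ _ (by omega) (by omega) h; omega
  subtree i hi := hp.subtree (r + i) (by omega)
  source := hr
  target := hp.target

theorem first_return (hp : G.IsSubtreePath w p k) (hk : 0 < k) :
    ∃ r l, k = r + l ∧ G.IsSubtreePath w (fun i => p (r + i)) l ∧
      (r = 1 ∨ ∃ m γ, r = m + 2 ∧ G.IsSubtreePath (w ++ [γ]) (fun i => p (i + 1)) m) := by
  have hex : ∃ r, 0 < r ∧ r ≤ k ∧ (p r).1 = w := ⟨k, hk, le_rfl, hp.target⟩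
  obtain ⟨r, ⟨hr0, hrk, hrw⟩, hmin⟩ : ∃ r, (0 < r ∧ r ≤ k ∧ (p r).1 = w) ∧
      ∀ i < r, ¬ (0 < i ∧ i ≤ k ∧ (p i).1 = w) :=
    ⟨_, Nat.find_spec hex, fun _ => Nat.find_min hex⟩
  obtain ⟨l, rfl⟩ := Nat.exists_eq_add_of_le hrk
  refine ⟨r, l, rfl, hp.shift hrw, ?_⟩
  rcases (by omega : r = 1 ∨ 2 ≤ r) with hr1 | hr2
  · exact Or.inl hr1
  have hoff : ∀ i, 0 < i → i < r → (p i).1 ≠ w :=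
    fun i hi hir h => hmin i hir ⟨hi, by omega, h⟩
  obtain ⟨γ, hγ⟩ := (hp.treeAdj (i := 0) (by omega)).exists_eq_child
    (hp.source ▸ hp.subtree 1 (by omega)) (hp.source ▸ hoff 1 one_pos (by omega))
  have hsub : ∀ i, 0 < i → i < r → w ++ [γ] <+: (p i).1 := by
    intro i hi
    induction i, hi using Nat.le_induction with
    | base => intro; rw [hγ, hp.source]
    | succ i hi ih =>
      exact fun hir =>
        (hp.treeAdj (by omega)).prefix_of_prefix (ih (by omega)) (hoff _ (by omega) hir)
  obtain ⟨m, rfl⟩ : ∃ m, r = m + 2 := ⟨r - 2, by omega⟩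
  refine Or.inr ⟨m, γ, rfl, ⟨fun i hi => hp.isPathTo (i + 1) (by omega), fun i j hi hj h => ?_,
    fun i hi => hsub (i + 1) (by omega) (by omega), by rw [hγ, hp.source], ?_⟩⟩
  · have := hp.injective _ _ (by omega) (by omega) h
    omega
  · have hadj := hp.treeAdj (i := m + 1) (by omega)
    rw [hrw] at hadj
    exact hadj.eq_of_prefix (hsub (m + 1) (by omega) (by omega))

theorem snd_mem_erase [DecidableEq R] {r l : ℕ} {S : Finset R}
    (hp : G.IsSubtreePath w p (r + l)) (hr : 0 < r) (hrw : (p r).1 = w)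
    (hS : ∀ i ≤ r + l, 0 < i → (p i).1 = w → (p i).2 ∈ S) :
    ∀ i ≤ l, 0 < i → (p (r + i)).1 = w → (p (r + i)).2 ∈ S.erase (p r).2 := by
  refine fun i hi hi0 hiw => Finset.mem_erase.mpr ⟨fun h => ?_, hS _ (by omega) (by omega) hiw⟩
  exact hp.ne (by omega) (by omega) (by omega) (Prod.ext (hiw.trans hrw.symm) h)

end CGraph.IsSubtreePath

namespace CGraph.Precedes

variable {G : CGraph n R} {s t : Prop} {a b : Vtx n R}

theorem of_edge (h : G.Edge a b) : G.Precedes (G.lt a b) a b := Or.inr ⟨h, id⟩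

theorem mono (h : G.Precedes s a b) (hts : t → s) : G.Precedes t a b :=
  h.imp (fun h => ⟨h.1, mt hts h.2⟩) (fun h => ⟨h.1, h.2 ∘ hts⟩)

theorem edge (h : G.Precedes s a b) (hab : a ≠ b) : G.Edge a b ∧ (s → G.lt a b) :=
  h.resolve_left (fun h => hab h.1)

end CGraph.Precedes

theorem inBag_of_eq {v : Node n} {a : Vtx n R} (h : a.1 = v) : inBag v a := Or.inl h

theorem inBag_child {w : Node n} {γ : Fin n} {a : Vtx n R} (h : a.1 = w) :
    inBag (w ++ [γ]) a :=
  Or.inr ⟨γ, by rw [h]⟩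

theorem ne_of_fst_eq_of_fst_eq_child {w : Node n} {γ : Fin n} {a b : Vtx n R} (ha : a.1 = w)
    (hb : b.1 = w ++ [γ]) : a ≠ b := by
  rintro rfl
  simp [ha] at hb

section Wrap

def wrapPath (a b : Vtx n R) (q : ℕ → Vtx n R) (m : ℕ) : ℕ → Vtx n R
  | 0 => a
  | i + 1 => if i ≤ m then q i else b

variable {a b : Vtx n R} {q : ℕ → Vtx n R} {m : ℕ}

theorem CGraph.isPathTo_wrapPath {G : CGraph n R} (ha : G.Edge a (q 0)) (hb : G.Edge (q m) b)
    (hq : G.IsPathTo q m) : G.IsPathTo (wrapPath a b q m) (m + 2) := by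
  rintro (_ | i) hi
  · simpa [wrapPath, Edge] using ha
  · obtain him | rfl : i < m ∨ i = m := by omega
    · simpa [wrapPath, him.le, Nat.succ_le_of_lt him] using hq i him
    · simpa [wrapPath, Edge] using hb

theorem downThenUp_wrapPath (ha : IsChild (q 0).1 a.1) (hb : IsChild (q m).1 b.1)
    (hq : DownThenUp q m) : DownThenUp (wrapPath a b q m) (m + 2) := by
  obtain ⟨j, hjm, hdown, hup⟩ := hq
  refine ⟨j + 1, by omega, ?_, ?_⟩
  · rintro (_ | i) hi
    · simpa [wrapPath] using ha
    · simpa [wrapPath, show i ≤ m by omega, show i + 1 ≤ m by omega] using hdown i (by omega)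
  · rintro (_ | i) hji him
    · omega
    · obtain him' | rfl : i < m ∨ i = m := by omega
      · simpa [wrapPath, him'.le, Nat.succ_le_of_lt him'] using hup i (by omega) him'
      · simpa [wrapPath] using hb

theorem CGraph.strictLen_wrapPath (G : CGraph n R) :
    G.strictLen q m ≤ G.strictLen (wrapPath a b q m) (m + 2) ∧
      (G.lt a (q 0) ∨ G.lt (q m) b →
        G.strictLen q m < G.strictLen (wrapPath a b q m) (m + 2)) := by
  classical
  rw [strictLen_add_two, G.strictLen_congr (fun i => wrapPath a b q m (i + 1)) q
    (fun i hi => if_pos hi)]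
  simp only [wrapPath, zero_le, le_refl, ite_true, show ¬ m + 1 ≤ m by omega, ite_false]
  refine ⟨by omega, fun h => ?_⟩
  rcases h with h | h <;> simp only [h, ite_true] <;> omega

end Wrap

/-- Strict length that a subtree path must have to force a down-then-up path of strict
length `N` between its endpoints, when there are `T` registers. -/
def thresh (T : ℕ) : ℕ → ℕ
  | 0 => 1
  | N + 1 => T * (thresh T N + 1) + 1

theorem downThenUp_one (p : ℕ → Vtx n R) : DownThenUp p 1 :=
  ⟨0, one_pos, fun _ h => absurd h (Nat.not_lt_zero _), fun _ h₁ h₂ => by omega⟩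

namespace Framified

variable {c₀ cα : ℤ} (G : Framified n R c₀ cα) {v : Node n} {a b c : Vtx n R}

theorem not_strict_triangle (ha : inBag v a) (hb : inBag v b) (hc : inBag v c)
    (hab : G.Edge a b) (hbc : G.Edge b c) (hca : G.Edge c a)
    (hs : G.lt a b ∨ G.lt b c ∨ G.lt c a) : False := by
  apply G.no_bag_cycle v
  refine ⟨3, fun i => if i % 3 = 0 then a else if i % 3 = 1 then b else c,
    by norm_num, by norm_num, ?_, ?_, ?_⟩
  · intro i hi
    interval_cases i <;> simpa [CGraph.Edge]
  · rcases hs with h | h | h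
    · exact ⟨0, by norm_num, by simpa using h⟩
    · exact ⟨1, by norm_num, by simpa using h⟩
    · exact ⟨2, by norm_num, by simpa using h⟩
  · intro i hi
    interval_cases i <;> simp [ha, hb, hc]

/-- Inside a bag, edges compose: completeness supplies an edge between `a` and `c`,
and the absence of strict cycles in the bag orients it (strictly, if needed). -/
theorem edge_trans (ha : inBag v a) (hb : inBag v b) (hc : inBag v c) (hac : a ≠ c)
    (hab : G.Edge a b) (hbc : G.Edge b c) :
    G.Edge a c ∧ (G.lt a b ∨ G.lt b c → G.lt a c) := by
  have hca : ¬ (G.Edge c a ∧ (G.lt a b ∨ G.lt b c ∨ G.lt c a)) :=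
    fun h => G.not_strict_triangle ha hb hc hab hbc h.1 h.2
  have heq : G.eqe a c → G.eqe c a := G.eq_symm v a c ha hc hac
  rcases G.complete v a c ha hc hac with h | h | h | h
  · exact ⟨Or.inl h, fun _ => h⟩
  · exact (hca ⟨Or.inl h, Or.inr (Or.inr h)⟩).elim
  · exact ⟨Or.inr h, fun hs => (hca ⟨Or.inr (heq h), hs.imp_right Or.inl⟩).elim⟩
  · have h' := G.eq_symm v c a hc ha hac.symm h
    exact ⟨Or.inr h', fun hs => (hca ⟨Or.inr h, hs.imp_right Or.inl⟩).elim⟩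

theorem precedes_trans {s t : Prop} (ha : inBag v a) (hb : inBag v b) (hc : inBag v c)
    (hac : a ≠ c) (hab : G.Precedes s a b) (hbc : G.Precedes t b c) :
    G.Precedes (s ∨ t) a c := by
  rcases hab with ⟨rfl, hs⟩ | ⟨hab, hs⟩
  · exact hbc.mono (·.resolve_left hs)
  rcases hbc with ⟨rfl, ht⟩ | ⟨hbc, ht⟩
  · exact Or.inr ⟨hab, (·.elim hs (absurd · ht))⟩
  obtain ⟨hac', hstrict⟩ := G.edge_trans ha hb hc hac hab hbc
  exact Or.inr ⟨hac', fun h => hstrict (h.imp hs ht)⟩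

/-- Induction along first returns: the first segment collapses inside the bag of the child
it visits, and then, together with the rest, inside the bag of `w`. -/
theorem precedes_of_isSubtreePath {w : Node n} {p : ℕ → Vtx n R} {k : ℕ}
    (hp : G.IsSubtreePath w p k) : G.Precedes (0 < G.strictLen p k) (p 0) (p k) := by
  induction k using Nat.strong_induction_on generalizing w p with
  | _ k ih =>
  rcases Nat.eq_zero_or_pos k with rfl | hk
  · exact Or.inl ⟨rfl, by simp⟩
  obtain ⟨r, l, rfl, hrest, hseg⟩ := hp.first_return hk
  have hsegr : G.Precedes (0 < G.strictLen p r) (p 0) (p r) := by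
    rcases hseg with rfl | ⟨m, γ, rfl, hin⟩
    · exact (CGraph.Precedes.of_edge (hp.isPathTo 0 (by omega))).mono
        (G.strictLen_one_pos_iff p).mp
    have hbag : ∀ i, (p i).1 = w → inBag (w ++ [γ]) (p i) := fun i => inBag_child
    have hinner := G.precedes_trans (hbag 0 hp.source) (inBag_of_eq hin.source)
      (inBag_of_eq hin.target) (hp.ne (by omega) (by omega) (by omega))
      (CGraph.Precedes.of_edge (hp.isPathTo 0 (by omega))) (ih m (by omega) hin)
    have hseg := G.precedes_trans (hbag 0 hp.source) (inBag_of_eq hin.target)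
      (hbag _ hrest.source) (hp.ne (by omega) (by omega) (by omega)) hinner
      (CGraph.Precedes.of_edge (hp.isPathTo (m + 1) (by omega)))
    refine hseg.mono fun hpos => ?_
    rw [G.strictLen_add_two] at hpos
    by_cases h₀ : G.lt (p 0) (p 1)
    · exact Or.inl (Or.inl h₀)
    by_cases h₁ : G.lt (p (m + 1)) (p (m + 2))
    · exact Or.inr h₁
    rw [if_neg h₀, if_neg h₁] at hpos
    exact Or.inl (Or.inr (by omega))
  refine (G.precedes_trans (inBag_of_eq hp.source) (inBag_of_eq hrest.source)
    (inBag_of_eq hp.target) (hp.ne (by omega) le_rfl (by omega)) hsegr (ih l (by omega) hrest)).mono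
    fun hpos => ?_
  rw [G.strictLen_add] at hpos
  omega

/-- Pigeonhole: `p` returns to `w` at most `#S` times, so one of its segments between visits
to `w` has more than `M + 1` strict edges, and such a segment is an excursion into a child
whose inner path has at least `M` of them. The rest of `p` collapses inside bags. -/
theorem exists_heavy_excursion {w : Node n} {p : ℕ → Vtx n R} {k : ℕ}
    (hp : G.IsSubtreePath w p k) (M : ℕ) (S : Finset R)
    (hS : ∀ i ≤ k, 0 < i → (p i).1 = w → (p i).2 ∈ S)
    (hlong : S.card * (M + 1) < G.strictLen p k) :
    ∃ (γ : Fin n) (l : ℕ) (q : ℕ → Vtx n R), l < k ∧ G.IsSubtreePath (w ++ [γ]) q l ∧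
      M ≤ G.strictLen q l ∧ G.Edge (p 0) (q 0) ∧ G.Edge (q l) (p k) ∧
      (G.strictLen q l < G.strictLen p k → G.lt (p 0) (q 0) ∨ G.lt (q l) (p k)) := by
  classical
  induction k using Nat.strong_induction_on generalizing p S with
  | _ k ih =>
  have hk : 0 < k := by have := G.strictLen_le p k; omega
  obtain ⟨r, l, rfl, hrest, hseg⟩ := hp.first_return hk
  have hr : 0 < r := by rcases hseg with rfl | ⟨m, γ, rfl, -⟩ <;> omega
  have hsplit := G.strictLen_add p r l
  by_cases hheavy : ∃ m γ, r = m + 2 ∧ G.IsSubtreePath (w ++ [γ]) (fun i => p (i + 1)) m ∧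
      M ≤ G.strictLen (fun i => p (i + 1)) m
  · obtain ⟨m, γ, rfl, hin, hM⟩ := hheavy
    have hlast := G.precedes_trans (inBag_of_eq hin.target) (inBag_child hrest.source)
      (inBag_child hp.target) (hp.ne (by omega) le_rfl (by omega))
      (CGraph.Precedes.of_edge (hp.isPathTo (m + 1) (by omega)))
      (G.precedes_of_isSubtreePath hrest)
    obtain ⟨hlast, hlast_lt⟩ := hlast.edge (hp.ne (by omega) le_rfl (by omega))
    refine ⟨γ, m, _, by omega, hin, hM, hp.isPathTo 0 (by omega), hlast, fun hgain => ?_⟩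
    by_cases h₀ : G.lt (p 0) (p 1)
    · exact Or.inl h₀
    refine Or.inr (hlast_lt ?_)
    rw [G.strictLen_add_two, if_neg h₀] at hsplit
    split_ifs at hsplit with h₁
    · exact Or.inl h₁
    · exact Or.inr (by omega)
  have hlight : G.strictLen p r ≤ M + 1 := by
    rcases hseg with rfl | ⟨m, γ, rfl, hin⟩
    · exact (G.strictLen_le p 1).trans (by omega)
    have hM : G.strictLen (fun i => p (i + 1)) m < M := by
      by_contra! hM
      exact hheavy ⟨m, γ, rfl, hin, hM⟩
    exact (G.strictLen_add_two_le p m).trans (by omega)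
  rw [← Finset.card_erase_add_one (hS r (by omega) hr hrest.source), add_one_mul] at hlong
  obtain ⟨γ, l', q, hl', hq, hM, hq0, hql, hgain⟩ :=
    ih l (by omega) hrest (S.erase (p r).2) (hp.snd_mem_erase hr hrest.source hS) (by omega)
  have hfirst := G.precedes_trans (inBag_child hp.source) (inBag_child hrest.source)
    (inBag_of_eq hq.source) (ne_of_fst_eq_of_fst_eq_child hp.source hq.source)
    (G.precedes_of_isSubtreePath (hp.take hrest.source)) (CGraph.Precedes.of_edge hq0)
  obtain ⟨hfirst, hfirst_lt⟩ := hfirst.edge (ne_of_fst_eq_of_fst_eq_child hp.source hq.source)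
  refine ⟨γ, l', q, by omega, hq, hM, hfirst, hql, fun hlt => ?_⟩
  by_cases hpos : 0 < G.strictLen p r
  · exact Or.inl (hfirst_lt (Or.inl hpos))
  · exact (hgain (by omega)).imp_left (hfirst_lt ∘ Or.inr)

/-- Descend into a heavy excursion, recurse there, and wrap the result with the two edges
joining the excursion to the endpoints; the threshold makes sure that either the recursion
already yields `N + 1` strict edges, or one of the two wrapping edges is strict. -/
theorem exists_downThenUp_of_isSubtreePath [Fintype R] {w : Node n} {p : ℕ → Vtx n R} {k : ℕ}
    (hp : G.IsSubtreePath w p k) (N : ℕ) (hN : thresh (Fintype.card R) N ≤ G.strictLen p k) :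
    ∃ (K : ℕ) (q : ℕ → Vtx n R), q 0 = p 0 ∧ q K = p k ∧ G.IsPathTo q K ∧
      DownThenUp q K ∧ N ≤ G.strictLen q K := by
  induction k using Nat.strong_induction_on generalizing w p N with
  | _ k ih =>
  cases N with
  | zero =>
    have hk : 0 < k := by have := G.strictLen_le p k; simp [thresh] at hN; omega
    have hedge := ((G.precedes_of_isSubtreePath hp).edge (hp.ne (Nat.zero_le k) le_rfl hk.ne)).1
    refine ⟨1, fun i => if i = 0 then p 0 else p k, rfl, rfl, fun i hi => ?_, downThenUp_one _,
      Nat.zero_le _⟩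
    obtain rfl : i = 0 := by omega
    exact hedge
  | succ N =>
  obtain ⟨γ, l, q, hl, hq, hM, hq0, hql, hgain⟩ := G.exists_heavy_excursion hp
    (thresh (Fintype.card R) N) Finset.univ (fun _ _ _ _ => Finset.mem_univ _)
    (by simp only [thresh, Finset.card_univ] at hN ⊢; omega)
  obtain ⟨K, q', hq'0, hq'K, hq'path, hq'dtu, hq'N⟩ : ∃ (K : ℕ) (q' : ℕ → Vtx n R),
      q' 0 = q 0 ∧ q' K = q l ∧ G.IsPathTo q' K ∧ DownThenUp q' K ∧
      (N + 1 ≤ G.strictLen q' K ∨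
        N ≤ G.strictLen q' K ∧ (G.lt (p 0) (q 0) ∨ G.lt (q l) (p k))) := by
    by_cases hbig : thresh (Fintype.card R) (N + 1) ≤ G.strictLen q l
    · obtain ⟨K, q', h0, hK, hpath, hdtu, hN'⟩ := ih l hl hq (N + 1) hbig
      exact ⟨K, q', h0, hK, hpath, hdtu, Or.inl hN'⟩
    · obtain ⟨K, q', h0, hK, hpath, hdtu, hN'⟩ := ih l hl hq N hM
      exact ⟨K, q', h0, hK, hpath, hdtu, Or.inr ⟨hN', hgain ((not_le.mp hbig).trans_le hN)⟩⟩
  refine ⟨K + 2, wrapPath (p 0) (p k) q' K, rfl, by simp [wrapPath], ?_, ?_, ?_⟩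
  · exact CGraph.isPathTo_wrapPath (hq'0 ▸ hq0) (hq'K ▸ hql) hq'path
  · refine downThenUp_wrapPath ?_ ?_ hq'dtu
    · rw [hq'0, hp.source, hq.source]
      exact ⟨γ, rfl⟩
    · rw [hq'K, hp.target, hq.target]
      exact ⟨γ, rfl⟩
  · obtain ⟨hle, hlt⟩ := G.strictLen_wrapPath (a := p 0) (b := p k) (q := q') (m := K)
    rw [hq'0, hq'K] at hlt
    rcases hq'N with hq'N | ⟨hq'N, hstrict⟩
    · exact hq'N.trans hle
    · exact hq'N.trans_lt (hlt hstrict)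

end Framified

theorem ell_infinite_down_then_up_general (n : ℕ)
    (R : Type) [Fintype R] (c₀ cα : ℤ)
    (G : Framified n R c₀ cα) (u : Node n) (x y : R)
    (h : EllInf G u x y) :
    ∀ N : ℕ, ∃ (k : ℕ) (p : ℕ → Vtx n R),
      p 0 = (u, x) ∧ p k = (u, y) ∧ G.toCGraph.IsPathTo p k ∧
      DownThenUp p k ∧ N ≤ G.toCGraph.strictLen p k := by
  intro N
  obtain ⟨k, p, hp0, hpk, hpath, hinj, hsub, hlong⟩ := h (thresh (Fintype.card R) N)
  have hp : G.IsSubtreePath u p k := ⟨hpath, hinj, hsub, by rw [hp0], by rw [hpk]⟩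
  obtain ⟨K, q, hq0, hqK, hq⟩ := G.exists_downThenUp_of_isSubtreePath hp N hlong
  exact ⟨K, q, hq0.trans hp0, hqK.trans hpk, hq⟩

/-- if `ℓ((u,x),(u,y)) = ∞` in a framified constraint graph, then for
every `N` there is a down-then-up path from `(u,x)` to `(u,y)` of strict length at
least `N`. -/
theorem ell_infinite_down_then_up (n : ℕ) (hn : 1 ≤ n)
    (R : Type) [Fintype R] [Nonempty R] (c₀ cα : ℤ) (hc : c₀ ≤ cα)
    (G : Framified n R c₀ cα) (u : Node n) (x y : R)
    (h : EllInf G u x y) :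
    ∀ N : ℕ, ∃ (k : ℕ) (p : ℕ → Vtx n R),
      p 0 = (u, x) ∧ p k = (u, y) ∧ G.toCGraph.IsPathTo p k ∧
      DownThenUp p k ∧ N ≤ G.toCGraph.strictLen p k :=
  ell_infinite_down_then_up_general n R c₀ cα G u x y h

end ConstraintGraphs
end
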